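/- arXiv:2106.11213 — 3 statements merged into one kernel-verified Lean document; each statement's English description precedes it below -/
import Mathlib

section
/- Let X be an n×p totally unimodular matrix with n ≥ p. Define the robustness r(X) = (number of p-element row subsets S with det(X_S) ≠ 0) / C(n,p). Then r(X) = det(XᵀX) / C(n,p). In particular, among totally unimodular n×p matrices, maximizing det(XᵀX) is equivalent to maximizing robustness. -/
/-! By Cauchy–Binet, `det (Xᵀ X) = ∑_S det (X_S) ^ 2` over the `p`-element row sets `S`. Total
unimodularity makes each `det (X_S)` one of `0, 1, -1`, so the summand is `1` exactly when `X_S` is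
nonsingular, and the sum counts those `S`. -/

open Matrix Finset Equiv

def TotallyUnimodular {n p : ℕ} (X : Matrix (Fin n) (Fin p) ℝ) : Prop :=
  ∀ (k : ℕ) (f : Fin k → Fin n) (g : Fin k → Fin p),
    (X.submatrix f g).det = 0 ∨ (X.submatrix f g).det = 1 ∨ (X.submatrix f g).det = -1

namespace Finset

variable {ι : Type*} [LinearOrder ι] {p : ℕ}

theorem injective_orderEmbOfFin_comp :
    Function.Injective fun x : {S : Finset ι // #S = p} × Perm (Fin p) =>
      x.1.1.orderEmbOfFin x.1.2 ∘ x.2 := by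
  rintro ⟨S, σ⟩ ⟨T, τ⟩ h
  have hST : S = T := Subtype.ext <| coe_injective <| by
    simpa only [Set.range_comp, σ.surjective.range_comp, τ.surjective.range_comp,
      range_orderEmbOfFin] using congrArg Set.range h
  subst hST
  exact Prod.ext rfl <| Equiv.ext fun i => (S.1.orderEmbOfFin S.2).injective (congrFun h i)

theorem exists_orderEmbOfFin_comp_eq {f : Fin p → ι} (hf : Function.Injective f) :
    ∃ x : {S : Finset ι // #S = p} × Perm (Fin p), x.1.1.orderEmbOfFin x.1.2 ∘ x.2 = f := by
  classical
  have hcard : #(univ.image f) = p := by simp [card_image_of_injective _ hf]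
  let e := (univ.image f).orderIsoOfFin hcard
  let σ : Fin p → Fin p := fun i => e.symm ⟨f i, mem_image_of_mem f (mem_univ i)⟩
  have hσ : Function.Injective σ := fun i j hij => hf <| by
    simpa [σ, Subtype.ext_iff] using congrArg e hij
  refine ⟨(⟨_, hcard⟩, Equiv.ofBijective σ (Finite.injective_iff_bijective.1 hσ)), ?_⟩
  funext i
  simp only [Function.comp_apply, Equiv.ofBijective_apply, σ, ← coe_orderIsoOfFin_apply]
  simp [e]

end Finset

namespace Matrix

variable {R ι : Type*} [CommRing R] [Fintype ι] {p : ℕ}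

theorem det_mul_eq_sum_prod_mul_det_submatrix (A : Matrix (Fin p) ι R)
    (B : Matrix ι (Fin p) R) :
    (A * B).det = ∑ f : Fin p → ι, (∏ i, B (f i) i) * (A.submatrix id f).det := by
  calc (A * B).det
      = ∑ σ : Perm (Fin p), ∑ f : Fin p → ι, Perm.sign σ * ∏ i, A (σ i) (f i) * B (f i) i := by
        simp only [det_apply', mul_apply, prod_univ_sum, Fintype.piFinset_univ, mul_sum]
    _ = ∑ f : Fin p → ι, ∑ σ : Perm (Fin p), Perm.sign σ * ∏ i, A (σ i) (f i) * B (f i) i :=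
        sum_comm
    _ = ∑ f : Fin p → ι, (∏ i, B (f i) i) * (A.submatrix id f).det := by
        simp only [det_apply', mul_sum, submatrix_apply, id_eq, prod_mul_distrib]
        exact sum_congr rfl fun f _ => sum_congr rfl fun σ _ => by ring

theorem det_mul_eq_sum_det_submatrix_mul_det_submatrix [LinearOrder ι]
    (A : Matrix (Fin p) ι R) (B : Matrix ι (Fin p) R) :
    (A * B).det = ∑ S : {S : Finset ι // #S = p},
      (A.submatrix id (S.1.orderEmbOfFin S.2)).det *
        (B.submatrix (S.1.orderEmbOfFin S.2) id).det := by
  have hvanish : ∀ f ∉ Set.range fun x : {S : Finset ι // #S = p} × Perm (Fin p) =>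
      x.1.1.orderEmbOfFin x.1.2 ∘ x.2, (∏ i, B (f i) i) * (A.submatrix id f).det = 0 := by
    intro f hf
    obtain ⟨i, j, hfij, hij⟩ := Function.not_injective_iff.1 fun hinj =>
      hf (exists_orderEmbOfFin_comp_eq hinj)
    rw [det_zero_of_column_eq hij fun k => by simp [hfij], mul_zero]
  -- The injective column selections are exactly the sorted enumerations of the `p`-sets,
  -- composed with a permutation.
  rw [det_mul_eq_sum_prod_mul_det_submatrix,
    ← Fintype.sum_of_injective _ injective_orderEmbOfFin_comp _ _ hvanish fun _ => rfl,
    Fintype.sum_prod_type]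
  refine sum_congr rfl fun S _ => ?_
  simp only [det_apply' (B.submatrix _ id), mul_sum, Function.comp_def]
  refine sum_congr rfl fun σ _ => ?_
  rw [show A.submatrix id (fun i => S.1.orderEmbOfFin S.2 (σ i))
      = (A.submatrix id (S.1.orderEmbOfFin S.2)).submatrix id σ from rfl, det_permute']
  simp only [submatrix_apply, id_eq]
  ring

theorem det_transpose_mul_self_eq_sum_sq [LinearOrder ι] (X : Matrix ι (Fin p) R) :
    (Xᵀ * X).det =
      ∑ S : {S : Finset ι // #S = p}, (X.submatrix (S.1.orderEmbOfFin S.2) id).det ^ 2 := by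
  simp only [det_mul_eq_sum_det_submatrix_mul_det_submatrix, ← transpose_submatrix, det_transpose,
    sq]

end Matrix

theorem TotallyUnimodular.det_transpose_mul_self_eq_card {n p : ℕ}
    {X : Matrix (Fin n) (Fin p) ℝ} (hX : TotallyUnimodular X) :
    (Xᵀ * X).det = Nat.card {S : {S : Finset (Fin n) // #S = p} //
        (X.submatrix (S.1.orderEmbOfFin S.2) id).det ≠ 0} := by
  have hsq : ∀ S : {S : Finset (Fin n) // #S = p},
      (X.submatrix (S.1.orderEmbOfFin S.2) id).det ^ 2 =
        if (X.submatrix (S.1.orderEmbOfFin S.2) id).det ≠ 0 then 1 else 0 := fun S => by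
    rcases hX p (S.1.orderEmbOfFin S.2) id with h | h | h <;> simp [h]
  rw [det_transpose_mul_self_eq_sum_sq, sum_congr rfl fun S _ => hsq S, sum_boole,
    Nat.card_eq_fintype_card, Fintype.card_subtype]

theorem robustness_eq_det_div_choose_general (n p : ℕ)
    (X : Matrix (Fin n) (Fin p) ℝ) (hTU : TotallyUnimodular X) (r : ℝ)
    (hr : r = (Nat.card {S : {S : Finset (Fin n) // S.card = p} //
        (X.submatrix (S.1.orderEmbOfFin S.2) id).det ≠ 0} : ℝ) / (n.choose p : ℝ)) :
    r = (X.transpose * X).det / (n.choose p : ℝ) := by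
  rw [hr, hTU.det_transpose_mul_self_eq_card]

/-- For a totally unimodular n×p matrix X with p ≤ n, the robustness
r(X) = #{p-element row subsets S with det(X_S) ≠ 0} / C(n,p) equals det(XᵀX) / C(n,p);
in particular maximizing det(XᵀX) (D-optimality) is equivalent to maximizing robustness. -/
theorem robustness_eq_det_div_choose (n p : ℕ) (hnp : p ≤ n)
    (X : Matrix (Fin n) (Fin p) ℝ) (hTU : TotallyUnimodular X) (r : ℝ)
    (hr : r = (Nat.card {S : {S : Finset (Fin n) // S.card = p} //
        (X.submatrix (S.1.orderEmbOfFin S.2) id).det ≠ 0} : ℝ) / (n.choose p : ℝ)) :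
    r = (X.transpose * X).det / (n.choose p : ℝ) :=
  robustness_eq_det_div_choose_general n p X hTU r hr
end

section
/- Let A be a p×K integer matrix of rank p. Every nonzero vector v ∈ ker(A) can be written as a nonnegative rational linear combination of at most K − p circuits of A, each of which is sign-compatible with v (i.e., each circuit u in the decomposition satisfies u_i·v_i ≥ 0 for all i and supp(u) ⊆ supp(v)). -/
/-!
Call `u` conformal to `v` if `u` is sign-compatible with `v` and `supp u ⊆ supp v`, and call a
nonzero vector of a subspace `W` elementary if no nonzero vector of `W` has strictly smaller
support. A nonzero vector of `W` of minimal support among those conformal to `v` is elementary: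
were `y ∈ W` of smaller support, subtracting from it the largest multiple of `±y` that keeps it
conformal would give a conformal vector of still smaller support. Subtracting from `v` the largest
multiple of such an elementary `u` keeping the rest conformal kills a coordinate of `v`, so the
vectors of `W` supported in `supp v` lose `u` and hence a dimension; by induction `v` is a
nonnegative combination of at most `dim W` elementary vectors conformal to it. For `W = ker A`
of dimension `K - p`, each elementary vector is a positive multiple of a primitive integer
vector, which is a circuit.
-/

/-- A circuit of an integer matrix A: a nonzero support-minimal integer vector in
ker(A) with coprime entries. -/
def IsCircuit {α β : Type*} [Fintype α] [Fintype β] (A : Matrix α β ℤ) (u : β → ℤ) : Prop :=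
  u ≠ 0 ∧ A.mulVec u = 0 ∧ Finset.univ.gcd u = 1 ∧
    ∀ v : β → ℤ, v ≠ 0 → A.mulVec v = 0 →
      (∀ i, v i ≠ 0 → u i ≠ 0) → (∀ i, u i ≠ 0 → v i ≠ 0)

open Finset Function Module

variable {ι : Type*}

def supportedSubmodule (𝕜 : Type*) [Field 𝕜] (s : Set ι) : Submodule 𝕜 (ι → 𝕜) :=
  Submodule.pi sᶜ fun _ => ⊥

section Field

variable {𝕜 : Type*} [Field 𝕜]

theorem mem_supportedSubmodule {s : Set ι} {w : ι → 𝕜} :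
    w ∈ supportedSubmodule 𝕜 s ↔ support w ⊆ s := by
  simp only [supportedSubmodule, Submodule.mem_pi, Submodule.mem_bot, Set.mem_compl_iff,
    Set.subset_def, mem_support]
  exact forall_congr' fun i => not_imp_comm

def IsElementary (W : Submodule 𝕜 (ι → 𝕜)) (u : ι → 𝕜) : Prop :=
  u ∈ W ∧ u ≠ 0 ∧ ∀ y ∈ W, y ≠ 0 → support y ⊆ support u → support u ⊆ support y

theorem IsElementary.of_smul {W : Submodule 𝕜 (ι → 𝕜)} {s : 𝕜} {u : ι → 𝕜} (hs : s ≠ 0)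
    (h : IsElementary W (s • u)) : IsElementary W u := by
  obtain ⟨hW, h0, hmin⟩ := h
  rw [support_const_smul_of_ne_zero s u hs] at hmin
  exact ⟨(W.smul_mem_iff hs).1 hW, right_ne_zero_of_smul h0, hmin⟩

section LinearOrder

variable [LinearOrder 𝕜] [IsStrictOrderedRing 𝕜]

def IsConformal (u v : ι → 𝕜) : Prop :=
  (∀ i, 0 ≤ u i * v i) ∧ support u ⊆ support v

theorem IsConformal.refl (v : ι → 𝕜) : IsConformal v v :=
  ⟨fun i => mul_self_nonneg (v i), subset_rfl⟩

theorem IsConformal.trans {u v w : ι → 𝕜} (huv : IsConformal u v) (hvw : IsConformal v w) :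
    IsConformal u w := by
  refine ⟨fun i => ?_, huv.2.trans hvw.2⟩
  by_cases hv : v i = 0
  · simp [show u i = 0 from not_ne_iff.1 fun hu => huv.2 hu hv]
  · have : 0 ≤ u i * w i * (v i * v i) := by
      nlinarith [mul_nonneg (huv.1 i) (hvw.1 i)]
    exact nonneg_of_mul_nonneg_left this (mul_self_pos.2 hv)

theorem IsConformal.of_smul {s : 𝕜} {u v : ι → 𝕜} (hs : 0 < s) (h : IsConformal (s • u) v) :
    IsConformal u v := by
  refine ⟨fun i => ?_, ?_⟩
  · have := h.1 i
    rw [Pi.smul_apply, smul_eq_mul, mul_assoc] at this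
    exact nonneg_of_mul_nonneg_right this hs
  · rw [← support_const_smul_of_ne_zero s u hs.ne']
    exact h.2

theorem IsConformal.exists_mul_pos {u v : ι → 𝕜} (h : IsConformal u v) (hu : u ≠ 0) :
    ∃ i, 0 < u i * v i := by
  obtain ⟨i, hi⟩ := support_nonempty_iff.2 hu
  exact ⟨i, (h.1 i).lt_of_ne' (mul_ne_zero hi (h.2 hi))⟩

/-- `t` is the largest scalar keeping `w - t • y` conformal to `w`. -/
theorem exists_sub_smul_isConformal_of_mul_pos [Fintype ι] {w y : ι → 𝕜}
    (hyw : support y ⊆ support w) (hpos : ∃ i, 0 < y i * w i) :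
    ∃ t : 𝕜, 0 < t ∧ IsConformal (w - t • y) w ∧ ∃ i, 0 < y i * w i ∧ (w - t • y) i = 0 := by
  obtain ⟨i₀, hi₀, hmin⟩ := exists_min_image (univ.filter fun i => 0 < y i * w i)
    (fun i => w i / y i) (by simpa [Finset.Nonempty] using hpos)
  simp only [mem_filter, mem_univ, true_and] at hi₀ hmin
  have ht : 0 < w i₀ / y i₀ := by
    rw [div_pos_iff]; rw [mul_pos_iff] at hi₀; tauto
  refine ⟨w i₀ / y i₀, ht, ⟨fun i => ?_, fun i hi hw => hi ?_⟩, i₀, hi₀, ?_⟩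
  · have hexpand : (w - (w i₀ / y i₀) • y) i * w i = w i * w i - w i₀ / y i₀ * (y i * w i) := by
      simp only [Pi.sub_apply, Pi.smul_apply, smul_eq_mul]; ring
    rw [hexpand]
    rcases le_or_gt (y i * w i) 0 with hi | hi
    · nlinarith [mul_self_nonneg (w i)]
    · have hw : w i / y i * (y i * w i) = w i * w i := by
        field_simp [left_ne_zero_of_mul hi.ne']
      nlinarith [mul_le_mul_of_nonneg_right (hmin i hi) hi.le]
  · have hyi : y i = 0 := not_ne_iff.1 fun hy => hyw hy hw
    simp [hw, hyi]
  · simp only [Pi.sub_apply, Pi.smul_apply, smul_eq_mul]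
    field_simp [left_ne_zero_of_mul hi₀.ne']
    ring

theorem exists_isElementary_isConformal [Fintype ι] {W : Submodule 𝕜 (ι → 𝕜)} {v : ι → 𝕜}
    (hv : v ∈ W) (hv0 : v ≠ 0) : ∃ u, IsElementary W u ∧ IsConformal u v := by
  obtain ⟨w, ⟨hwW, hw0, hwv⟩, hmin⟩ := (measure fun w : ι → 𝕜 => (support w).ncard).wf.has_min
    {w | w ∈ W ∧ w ≠ 0 ∧ IsConformal w v} ⟨v, hv, hv0, .refl v⟩
  have key : ∀ y ∈ W, support y ⊆ support w → (∃ i, 0 < y i * w i) → support w ⊆ support y := by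
    intro y hyW hyw hpos
    obtain ⟨t, -, hconf, i, hi, hzero⟩ := exists_sub_smul_isConformal_of_mul_pos hyw hpos
    have hsub : support (w - t • y) ⊂ support w :=
      (Set.ssubset_iff_of_subset hconf.2).2 ⟨i, right_ne_zero_of_mul hi.ne', fun h => h hzero⟩
    have heq : w - t • y = 0 := by
      by_contra hne
      exact hmin _ ⟨W.sub_mem hwW (W.smul_mem t hyW), hne, hconf.trans hwv⟩
        (Set.ncard_lt_ncard hsub)
    rw [sub_eq_zero.1 heq]
    exact support_const_smul_subset t y
  refine ⟨w, ⟨hwW, hw0, fun y hyW hy0 hyw => ?_⟩, hwv⟩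
  obtain ⟨i, hi⟩ := support_nonempty_iff.2 hy0
  rcases (mul_ne_zero hi (hyw hi)).lt_or_gt with hneg | hpos
  · simpa using key (-y) (W.neg_mem hyW) (by simpa using hyw) ⟨i, by simpa using hneg⟩
  · exact key y hyW hyw ⟨i, hpos⟩

theorem exists_conformal_decomposition [Fintype ι] (W : Submodule 𝕜 (ι → 𝕜)) {v : ι → 𝕜}
    (hv : v ∈ W) :
    ∃ m ≤ finrank 𝕜 ↥(W ⊓ supportedSubmodule 𝕜 (support v)),
      ∃ (c : Fin m → 𝕜) (u : Fin m → ι → 𝕜), (∀ j, 0 ≤ c j) ∧ (∀ j, IsElementary W (u j)) ∧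
        (∀ j, IsConformal (u j) v) ∧ v = ∑ j, c j • u j := by
  induction hn : finrank 𝕜 ↥(W ⊓ supportedSubmodule 𝕜 (support v)) using Nat.strong_induction_on
    generalizing v with
  | _ n ih =>
  by_cases hv0 : v = 0
  · exact ⟨0, n.zero_le, Fin.elim0, Fin.elim0, Fin.rec0, Fin.rec0, Fin.rec0, by simp [hv0]⟩
  obtain ⟨u, hu, huv⟩ := exists_isElementary_isConformal hv hv0
  obtain ⟨t, ht, hv'v, i, hi, hv'i⟩ :=
    exists_sub_smul_isConformal_of_mul_pos huv.2 (huv.exists_mul_pos hu.2.1)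
  set v' := v - t • u
  have hlt : W ⊓ supportedSubmodule 𝕜 (support v') < W ⊓ supportedSubmodule 𝕜 (support v) := by
    refine lt_of_le_of_ne (inf_le_inf_left _ fun w hw => ?_) fun heq => ?_
    · exact mem_supportedSubmodule.2 ((mem_supportedSubmodule.1 hw).trans hv'v.2)
    · have hu' : u ∈ W ⊓ supportedSubmodule 𝕜 (support v') :=
        heq ▸ ⟨hu.1, mem_supportedSubmodule.2 huv.2⟩
      have hui : u i = 0 := not_ne_iff.1 fun h => mem_supportedSubmodule.1 hu'.2 h hv'i
      exact left_ne_zero_of_mul hi.ne' hui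
  have hdim := Submodule.finrank_lt_finrank_of_lt hlt
  rw [hn] at hdim
  obtain ⟨m, hm, c, w, hc, hw, hwv', hsum⟩ :=
    ih _ hdim (W.sub_mem hv (W.smul_mem t hu.1)) rfl
  refine ⟨m + 1, by omega, Fin.cons t c, Fin.cons u w, ?_, ?_, ?_, ?_⟩
  · exact Fin.cases ht.le hc
  · exact Fin.cases hu hw
  · exact Fin.cases huv fun j => (hwv' j).trans hv'v
  · simp only [Fin.sum_univ_succ, Fin.cons_zero, Fin.cons_succ, ← hsum]
    abel

end LinearOrder

end Field

section Integer

variable {α : Type*}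

theorem support_fun_intCast (z : ι → ℤ) : support (fun i => (z i : ℚ)) = support z :=
  support_comp_eq Int.cast Int.cast_eq_zero z

theorem exists_pos_nat_smul_eq_intCast [Fintype ι] (w : ι → ℚ) :
    ∃ d : ℕ, 0 < d ∧ ∃ z : ι → ℤ, (d : ℚ) • w = fun i => (z i : ℚ) := by
  refine ⟨∏ i, (w i).den, prod_pos fun i _ => (w i).den_pos, ?_⟩
  have hint : ∀ i, ∃ n : ℤ, ((∏ i, (w i).den : ℕ) : ℚ) * w i = n := fun i => by
    obtain ⟨k, hk⟩ := dvd_prod_of_mem (fun i => (w i).den) (mem_univ i)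
    exact ⟨k * (w i).num, by rw [hk]; push_cast; rw [mul_comm ((w i).den : ℚ), mul_assoc,
      Rat.den_mul_eq_num]⟩
  choose z hz using hint
  exact ⟨z, funext hz⟩

theorem exists_pos_smul_primitive_intCast [Fintype ι] {w : ι → ℚ} (hw : w ≠ 0) :
    ∃ s : ℚ, 0 < s ∧ ∃ z : ι → ℤ, univ.gcd z = 1 ∧ w = s • fun i => (z i : ℚ) := by
  obtain ⟨d, hd, z₀, hz₀⟩ := exists_pos_nat_smul_eq_intCast w
  obtain ⟨i, hi⟩ := support_nonempty_iff.2 hw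
  obtain ⟨z, hz, hgcd⟩ := univ.extract_gcd z₀ ⟨i, mem_univ i⟩
  have hg : 0 < univ.gcd z₀ := by
    refine (Int.nonneg_of_normalize_eq_self (Finset.normalize_gcd ..)).lt_of_ne' fun h => hi ?_
    simpa [gcd_eq_zero_iff.1 h i (mem_univ i), hd.ne'] using congrFun hz₀ i
  refine ⟨univ.gcd z₀ / d, by positivity, z, hgcd, funext fun j => ?_⟩
  have := congrFun hz₀ j
  simp only [Pi.smul_apply, smul_eq_mul, hz j (mem_univ j), Int.cast_mul] at this ⊢
  field_simp
  linarith

theorem intCast_mulVec_eq_zero_iff [Fintype ι] {A : Matrix α ι ℤ} {z : ι → ℤ} :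
    (A.map ((↑) : ℤ → ℚ)).mulVec (fun i => (z i : ℚ)) = 0 ↔ A.mulVec z = 0 := by
  have hcast : (A.map ((↑) : ℤ → ℚ)).mulVec (fun i => (z i : ℚ)) = fun j => (A.mulVec z j : ℚ) :=
    funext fun j => ((Int.castRingHom ℚ).map_mulVec A z j).symm
  simp [hcast, funext_iff]

theorem isCircuit_of_isElementary_intCast [Fintype α] [Fintype ι] {A : Matrix α ι ℤ} {z : ι → ℤ}
    (hz : IsElementary (LinearMap.ker (A.map ((↑) : ℤ → ℚ)).mulVecLin) fun i => (z i : ℚ))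
    (hgcd : univ.gcd z = 1) : IsCircuit A z := by
  obtain ⟨hker, hz0, hmin⟩ := hz
  rw [support_fun_intCast] at hmin
  refine ⟨fun h => hz0 (funext fun i => by simp [h]), intCast_mulVec_eq_zero_iff.1 hker, hgcd,
    fun y hy0 hy hyz => ?_⟩
  have := hmin (fun i => (y i : ℚ)) (intCast_mulVec_eq_zero_iff.2 hy)
    (fun h => hy0 (funext fun i => by simpa using congrFun h i))
  rw [support_fun_intCast] at this
  exact this hyz

theorem IsElementary.exists_isCircuit [Fintype α] [Fintype ι] {A : Matrix α ι ℤ} {u : ι → ℚ}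
    (hu : IsElementary (LinearMap.ker (A.map ((↑) : ℤ → ℚ)).mulVecLin) u) :
    ∃ s : ℚ, 0 < s ∧ ∃ z : ι → ℤ, IsCircuit A z ∧ u = s • fun i => (z i : ℚ) := by
  obtain ⟨s, hs, z, hgcd, rfl⟩ := exists_pos_smul_primitive_intCast hu.2.1
  exact ⟨s, hs, z, isCircuit_of_isElementary_intCast (hu.of_smul hs.ne') hgcd, rfl⟩

end Integer

theorem kernel_vector_conformal_circuit_decomposition_general {p K : ℕ}
    (A : Matrix (Fin p) (Fin K) ℤ) (hA : (A.map ((↑) : ℤ → ℚ)).rank = p)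
    (v : Fin K → ℚ) (hker : (A.map ((↑) : ℤ → ℚ)).mulVec v = 0) :
    ∃ m : ℕ, m ≤ K - p ∧ ∃ (c : Fin m → ℚ) (u : Fin m → Fin K → ℤ),
      (∀ j, 0 ≤ c j) ∧ (∀ j, IsCircuit A (u j)) ∧
      (∀ j i, 0 ≤ (u j i : ℚ) * v i) ∧
      (∀ j i, u j i ≠ 0 → v i ≠ 0) ∧
      (∀ i, v i = ∑ j, c j * (u j i : ℚ)) := by
  have hdim : finrank ℚ (LinearMap.ker (A.map ((↑) : ℤ → ℚ)).mulVecLin) = K - p := by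
    have := (A.map ((↑) : ℤ → ℚ)).mulVecLin.finrank_range_add_finrank_ker
    rw [← Matrix.rank, hA, finrank_fin_fun] at this
    omega
  obtain ⟨m, hm, c, u, hc, hu, huv, hsum⟩ :=
    exists_conformal_decomposition (LinearMap.ker (A.map ((↑) : ℤ → ℚ)).mulVecLin) hker
  choose s hs z hz hzu using fun j => (hu j).exists_isCircuit
  have hzv : ∀ j, IsConformal (fun i => (z j i : ℚ)) v := fun j =>
    IsConformal.of_smul (hs j) (hzu j ▸ huv j)
  refine ⟨m, hdim ▸ hm.trans (Submodule.finrank_mono inf_le_left), fun j => c j * s j, z,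
    fun j => mul_nonneg (hc j) (hs j).le, hz, fun j => (hzv j).1, fun j i hi => ?_, fun i => ?_⟩
  · exact (hzv j).2 (show (z j i : ℚ) ≠ 0 by exact_mod_cast hi)
  · simp only [hsum, hzu, Finset.sum_apply, Pi.smul_apply, smul_eq_mul, mul_assoc]

/-- Every nonzero rational kernel vector of a full-row-rank p×K integer matrix A
can be written as a nonnegative rational combination of at most K−p circuits,
each sign-compatible with v and with support inside supp(v). -/
theorem kernel_vector_conformal_circuit_decomposition {p K : ℕ}
    (A : Matrix (Fin p) (Fin K) ℤ) (hA : (A.map ((↑) : ℤ → ℚ)).rank = p)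
    (v : Fin K → ℚ) (hv : v ≠ 0) (hker : (A.map ((↑) : ℤ → ℚ)).mulVec v = 0) :
    ∃ m : ℕ, m ≤ K - p ∧ ∃ (c : Fin m → ℚ) (u : Fin m → Fin K → ℤ),
      (∀ j, 0 ≤ c j) ∧ (∀ j, IsCircuit A (u j)) ∧
      (∀ j i, 0 ≤ (u j i : ℚ) * v i) ∧
      (∀ j i, u j i ≠ 0 → v i ≠ 0) ∧
      (∀ i, v i = ∑ j, c j * (u j i : ℚ)) :=
  kernel_vector_conformal_circuit_decomposition_general A hA v hker
end

section
/- Let X⁽²⁾ = (X⁽¹⁾ | X⁽ᵃ⁾) be a block-column partition of an n×p integer matrix. If u is a circuit of (X⁽²⁾)ᵀ, then either u is a circuit of (X⁽¹⁾)ᵀ, or there exists a circuit v of (X⁽¹⁾)ᵀ with supp(v) strictly contained in supp(u); in the latter case vᵀX⁽ᵃ⁾ ≠ 0. -/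
open Function Matrix

section Circuit

variable {α β : Type*} [Fintype α] [Fintype β] (A : Matrix α β ℤ)

theorem exists_isCircuit_support_eq_of_minimal {v : β → ℤ} (hv : v ≠ 0) (hAv : A *ᵥ v = 0)
    (hmin : ∀ w : β → ℤ, w ≠ 0 → A *ᵥ w = 0 → support w ⊆ support v → support v ⊆ support w) :
    ∃ c, IsCircuit A c ∧ support c = support v := by
  obtain ⟨i, hi⟩ := ne_iff.mp hv
  obtain ⟨c, hvc, hc⟩ := Finset.univ.extract_gcd v ⟨i, Finset.mem_univ i⟩
  set g := Finset.univ.gcd v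
  have hg : g ≠ 0 := fun h => hi (Finset.gcd_eq_zero_iff.mp h i (Finset.mem_univ i))
  have hv_eq : v = g • c := funext fun j => hvc j (Finset.mem_univ j)
  have hsupp : support c = support v := by
    rw [hv_eq, support_const_smul_of_ne_zero g c hg]
  refine ⟨c, ⟨?_, ?_, hc, ?_⟩, hsupp⟩
  · rintro rfl
    exact hv (by rw [hv_eq, smul_zero])
  · rw [hv_eq, mulVec_smul, smul_eq_zero] at hAv
    exact hAv.resolve_left hg
  · intro w hw hAw
    change support w ⊆ support c → support c ⊆ support w
    rw [hsupp]
    exact hmin w hw hAw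

theorem exists_isCircuit_support_subset {w : β → ℤ} (hw : w ≠ 0) (hAw : A *ᵥ w = 0) :
    ∃ c, IsCircuit A c ∧ support c ⊆ support w := by
  obtain ⟨s, hsw, ⟨v, hv, hAv, rfl⟩, hmin⟩ :=
    exists_minimal_le_of_wellFoundedLT (fun s => ∃ v : β → ℤ, v ≠ 0 ∧ A *ᵥ v = 0 ∧ support v = s)
      (support w) ⟨w, hw, hAw, rfl⟩
  obtain ⟨c, hc, hcv⟩ := exists_isCircuit_support_eq_of_minimal A hv hAv
    fun w' hw' hAw' => hmin ⟨w', hw', hAw', rfl⟩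
  exact ⟨c, hc, hcv.trans_le hsw⟩

end Circuit

theorem transpose_mulVec_eq_zero_iff_inl_inr {α β γ R : Type*} [Fintype α]
    [NonUnitalNonAssocSemiring R] (A : Matrix α (β ⊕ γ) R) (w : α → R) :
    Aᵀ *ᵥ w = 0 ↔
      (A.submatrix id Sum.inl)ᵀ *ᵥ w = 0 ∧ (A.submatrix id Sum.inr)ᵀ *ᵥ w = 0 := by
  simp only [funext_iff, Sum.forall, submatrix, Pi.zero_apply, id_eq]
  rfl

/-- For a block-column partition X⁽²⁾ = (X⁽¹⁾ | X⁽ᵃ⁾): every circuit u of (X⁽²⁾)ᵀ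
either is a circuit of (X⁽¹⁾)ᵀ, or there is a circuit v of (X⁽¹⁾)ᵀ with support
strictly contained in supp(u); in the latter case vᵀX⁽ᵃ⁾ ≠ 0. -/
theorem circuit_restrict_model {n q r : ℕ} (X2 : Matrix (Fin n) (Fin q ⊕ Fin r) ℤ)
    (u : Fin n → ℤ) (hu : IsCircuit X2.transpose u) :
    IsCircuit (X2.submatrix id Sum.inl).transpose u ∨
      ∃ v : Fin n → ℤ, IsCircuit (X2.submatrix id Sum.inl).transpose v ∧
        {i | v i ≠ 0} ⊂ {i | u i ≠ 0} ∧
        (X2.submatrix id Sum.inr).transpose.mulVec v ≠ 0 := by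
  obtain ⟨hu0, hX2u, hgcd, humin⟩ := hu
  have hX1u := ((transpose_mulVec_eq_zero_iff_inl_inr X2 u).mp hX2u).1
  by_cases hmin : ∀ w : Fin n → ℤ, w ≠ 0 → (X2.submatrix id Sum.inl)ᵀ *ᵥ w = 0 →
      support w ⊆ support u → support u ⊆ support w
  · exact Or.inl ⟨hu0, hX1u, hgcd, hmin⟩
  push Not at hmin
  obtain ⟨w, hw0, hX1w, hwu, huw⟩ := hmin
  obtain ⟨v, hv, hvw⟩ := exists_isCircuit_support_subset _ hw0 hX1w
  have hvu : support v ⊂ support u := hvw.trans_ssubset (ssubset_of_subset_not_subset hwu huw)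
  refine Or.inr ⟨v, hv, hvu, fun hXav => hvu.not_subset ?_⟩
  exact humin v hv.1 ((transpose_mulVec_eq_zero_iff_inl_inr X2 v).mpr ⟨hv.2.1, hXav⟩) hvu.subset
end
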